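/- Zero-update property of flexible GBT: let D be a flexible-GBT dataset and let D' be obtained from D by adding one comparison (a, b, r, f). If r = Φ_f'((x_a − x_b)ᵀ β*(D)), then β*(D') = β*(D). -/

import Mathlib

open MeasureTheory RealInnerProductSpace

noncomputable section

/-- The cumulant generating function `Φ_μ(θ) = log ∫ exp(θ r) dμ(r)` of a measure `μ` on `ℝ`. -/
def cgfm (μ : Measure ℝ) (θ : ℝ) : ℝ := Real.log (∫ r, Real.exp (θ * r) ∂μ)

/-- `μ` has finite exponential moments: `∫ exp(θ r) dμ(r) < ∞` for every `θ`. -/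
def HasExpMoments (μ : Measure ℝ) : Prop :=
  ∀ θ : ℝ, Integrable (fun r => Real.exp (θ * r)) μ

/-- The quadratic form `v ↦ vᵀ M v`. -/
def quadForm {n : ℕ} (M : Matrix (Fin n) (Fin n) ℝ) (v : EuclideanSpace ℝ (Fin n)) : ℝ :=
  ∑ i, ∑ j, v i * M i j * v j

/-- The flexible-GBT negative log-posterior `L(β | D)` for a dataset `data` consisting of
comparisons `(a, b, r, f)` (entities `a, b`, value `r`, root law `f`), with embedding columns
`x a ∈ ℝ^D` and prior covariance matrix `S = Σ_β`. -/
def fgbtLoss {Dd A : ℕ} (x : Fin A → EuclideanSpace ℝ (Fin Dd))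
    (S : Matrix (Fin Dd) (Fin Dd) ℝ)
    (data : Multiset (Fin A × Fin A × ℝ × Measure ℝ))
    (β : EuclideanSpace ℝ (Fin Dd)) : ℝ :=
  (1 / 2) * quadForm S⁻¹ β
    + (data.map (fun q =>
        cgfm q.2.2.2 ⟪x q.1 - x q.2.1, β⟫ - q.2.2.1 * ⟪x q.1 - x q.2.1, β⟫)).sum

/-!
The term `Φ_f(⟪x_a - x_b, β⟫) - r ⟪x_a - x_b, β⟫` of the added comparison is a convex function
of `β` whose derivative along `x_a - x_b` vanishes at `β*(D)` by the choice of `r`, so `β*(D)`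
minimizes it. As `β*(D)` also minimizes `L(· | D)`, it minimizes the sum `L(· | D')`. The latter
is strictly convex (a positive-definite quadratic form plus convex cumulant terms), so its
minimizer is unique.
-/

open ProbabilityTheory Set

section CumulantGeneratingFunction

variable {μ : Measure ℝ}

lemma cgfm_eq_cgf (μ : Measure ℝ) : cgfm μ = cgf id μ := rfl

lemma HasExpMoments.mem_interior_integrableExpSet (hμ : HasExpMoments μ) (θ : ℝ) :
    θ ∈ interior (integrableExpSet id μ) := by
  rw [show integrableExpSet id μ = univ from eq_univ_of_forall hμ, interior_univ]
  exact mem_univ θ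

lemma HasExpMoments.analyticAt_cgfm (hμ : HasExpMoments μ) (θ : ℝ) :
    AnalyticAt ℝ (cgfm μ) θ :=
  analyticAt_cgf (hμ.mem_interior_integrableExpSet θ)

lemma HasExpMoments.convexOn_cgfm (hμ : HasExpMoments μ) : ConvexOn ℝ univ (cgfm μ) := by
  refine convexOn_univ_of_deriv2_nonneg (fun θ => (hμ.analyticAt_cgfm θ).differentiableAt)
    (fun θ => (hμ.analyticAt_cgfm θ).deriv.differentiableAt) fun θ => ?_
  rw [← iteratedDeriv_eq_iterate, cgfm_eq_cgf,
    iteratedDeriv_two_cgf_eq_integral (hμ.mem_interior_integrableExpSet θ)]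
  exact div_nonneg (integral_nonneg fun r => by positivity) mgf_nonneg

lemma HasExpMoments.convexOn_cgfm_sub_mul (hμ : HasExpMoments μ) (c : ℝ) :
    ConvexOn ℝ univ (fun θ => cgfm μ θ - c * θ) :=
  hμ.convexOn_cgfm.sub ((LinearMap.mul ℝ ℝ c).concaveOn convex_univ)

lemma HasExpMoments.isMinOn_cgfm_sub_deriv_mul (hμ : HasExpMoments μ) (s : ℝ) :
    IsMinOn (fun θ => cgfm μ θ - deriv (cgfm μ) s * θ) univ s := by
  have hderiv : HasDerivAt (fun θ => cgfm μ θ - deriv (cgfm μ) s * θ) 0 s := by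
    simpa using (hμ.analyticAt_cgfm s).differentiableAt.hasDerivAt.fun_sub
      ((hasDerivAt_id s).const_mul (deriv (cgfm μ) s))
  exact (hμ.convexOn_cgfm_sub_mul _).isMinOn_of_rightDeriv_eq_zero (by simp)
    (hderiv.hasDerivWithinAt.derivWithin (uniqueDiffWithinAt_Ioi s))

end CumulantGeneratingFunction

section QuadraticForm

variable {n : ℕ} {M : Matrix (Fin n) (Fin n) ℝ}

lemma quadForm_pos (hM : M.PosDef) {v : EuclideanSpace ℝ (Fin n)} (hv : v ≠ 0) :
    0 < quadForm M v := by
  have hv' : WithLp.ofLp v ≠ 0 := fun h => hv (WithLp.ofLp_injective 2 h)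
  refine (hM.dotProduct_mulVec_pos hv').trans_eq ?_
  simp only [quadForm, dotProduct, Matrix.mulVec, star_trivial, Finset.mul_sum]
  exact Finset.sum_congr rfl fun i _ => Finset.sum_congr rfl fun j _ => by ring

lemma mul_quadForm_add_mul_quadForm (M : Matrix (Fin n) (Fin n) ℝ)
    (v w : EuclideanSpace ℝ (Fin n)) {a b : ℝ} (hab : a + b = 1) :
    a * quadForm M v + b * quadForm M w
      = quadForm M (a • v + b • w) + a * b * quadForm M (v - w) := by
  obtain rfl : b = 1 - a := by linarith
  simp only [quadForm, PiLp.add_apply, PiLp.smul_apply, PiLp.sub_apply, smul_eq_mul,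
    Finset.mul_sum, ← Finset.sum_add_distrib]
  exact Finset.sum_congr rfl fun i _ => Finset.sum_congr rfl fun j _ => by ring

lemma Matrix.PosDef.strictConvexOn_mul_quadForm (hM : M.PosDef) {c : ℝ} (hc : 0 < c) :
    StrictConvexOn ℝ univ (fun v => c * quadForm M v) := by
  refine ⟨convex_univ, fun v _ w _ hvw a b ha hb hab => ?_⟩
  have hgap : 0 < c * (a * b * quadForm M (v - w)) :=
    mul_pos hc (mul_pos (mul_pos ha hb) (quadForm_pos hM (sub_ne_zero.mpr hvw)))
  calc c * quadForm M (a • v + b • w)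
      < c * quadForm M (a • v + b • w) + c * (a * b * quadForm M (v - w)) :=
        lt_add_of_pos_right _ hgap
    _ = a • (c * quadForm M v) + b • (c * quadForm M w) := by
        rw [smul_eq_mul, smul_eq_mul]
        linear_combination -c * mul_quadForm_add_mul_quadForm M v w hab

end QuadraticForm

lemma convexOn_multiset_sum_map {ι E : Type*} [AddCommGroup E] [Module ℝ E] {t : Set E}
    (ht : Convex ℝ t) (s : Multiset ι) {f : ι → E → ℝ} (hf : ∀ i ∈ s, ConvexOn ℝ t (f i)) :
    ConvexOn ℝ t fun y => (s.map fun i => f i y).sum := by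
  induction s using Multiset.induction_on with
  | empty => simpa using convexOn_const 0 ht
  | cons i s ih =>
    simp only [Multiset.map_cons, Multiset.sum_cons]
    exact (hf i (Multiset.mem_cons_self i s)).add
      (ih fun j hj => hf j (Multiset.mem_cons_of_mem hj))

section Loss

variable {Dd A : ℕ} (x : Fin A → EuclideanSpace ℝ (Fin Dd))

def comparisonLoss (q : Fin A × Fin A × ℝ × Measure ℝ) (β : EuclideanSpace ℝ (Fin Dd)) : ℝ :=
  cgfm q.2.2.2 ⟪x q.1 - x q.2.1, β⟫ - q.2.2.1 * ⟪x q.1 - x q.2.1, β⟫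

lemma fgbtLoss_cons (S : Matrix (Fin Dd) (Fin Dd) ℝ) (q : Fin A × Fin A × ℝ × Measure ℝ)
    (data : Multiset (Fin A × Fin A × ℝ × Measure ℝ)) (β : EuclideanSpace ℝ (Fin Dd)) :
    fgbtLoss x S (q ::ₘ data) β = comparisonLoss x q β + fgbtLoss x S data β := by
  simp only [fgbtLoss, comparisonLoss, Multiset.map_cons, Multiset.sum_cons]
  ring

lemma convexOn_comparisonLoss {q : Fin A × Fin A × ℝ × Measure ℝ}
    (hq : HasExpMoments q.2.2.2) : ConvexOn ℝ univ (comparisonLoss x q) :=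
  (hq.convexOn_cgfm_sub_mul q.2.2.1).comp_linearMap (innerₗ _ (x q.1 - x q.2.1))

lemma strictConvexOn_fgbtLoss {S : Matrix (Fin Dd) (Fin Dd) ℝ} (hS : S.PosDef)
    {data : Multiset (Fin A × Fin A × ℝ × Measure ℝ)}
    (hdata : ∀ q ∈ data, HasExpMoments q.2.2.2) :
    StrictConvexOn ℝ univ (fgbtLoss x S data) :=
  (hS.inv.strictConvexOn_mul_quadForm one_half_pos).add_convexOn
    (convexOn_multiset_sum_map convex_univ data fun q hq => convexOn_comparisonLoss x (hdata q hq))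

lemma isMinOn_comparisonLoss_of_eq_deriv {a b : Fin A} {r : ℝ} {f : Measure ℝ}
    (hf : HasExpMoments f) {β : EuclideanSpace ℝ (Fin Dd)}
    (hr : r = deriv (cgfm f) ⟪x a - x b, β⟫) :
    IsMinOn (comparisonLoss x (a, b, r, f)) univ β := by
  subst hr
  exact (hf.isMinOn_cgfm_sub_deriv_mul _).comp_mapsTo (mapsTo_univ _ _) rfl

end Loss

theorem fgbt_zero_update_general
    {Dd A : ℕ} (x : Fin A → EuclideanSpace ℝ (Fin Dd))
    (S : Matrix (Fin Dd) (Fin Dd) ℝ) (hS : S.PosDef)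
    (data : Multiset (Fin A × Fin A × ℝ × Measure ℝ))
    (hvalid : ∀ q ∈ data, IsProbabilityMeasure q.2.2.2 ∧ HasExpMoments q.2.2.2)
    (a b : Fin A) (r : ℝ) (f : Measure ℝ) (hf : HasExpMoments f)
    (βD βD' : EuclideanSpace ℝ (Fin Dd))
    (hminD : ∀ γ : EuclideanSpace ℝ (Fin Dd),
      fgbtLoss x S data βD ≤ fgbtLoss x S data γ)
    (hminD' : ∀ γ : EuclideanSpace ℝ (Fin Dd),
      fgbtLoss x S ((a, b, r, f) ::ₘ data) βD' ≤ fgbtLoss x S ((a, b, r, f) ::ₘ data) γ)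
    (hr : r = deriv (cgfm f) ⟪x a - x b, βD⟫) :
    βD' = βD := by
  have hdata : ∀ q ∈ (a, b, r, f) ::ₘ data, HasExpMoments q.2.2.2 := by
    intro q hq
    rcases Multiset.mem_cons.mp hq with rfl | hq
    exacts [hf, (hvalid q hq).2]
  have hβD : IsMinOn (fgbtLoss x S ((a, b, r, f) ::ₘ data)) univ βD := by
    rw [show fgbtLoss x S ((a, b, r, f) ::ₘ data) = _ from funext (fgbtLoss_cons x S _ data)]
    exact (isMinOn_comparisonLoss_of_eq_deriv x hf hr).add (isMinOn_univ_iff.mpr hminD)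
  exact (strictConvexOn_fgbtLoss x hS hdata).eq_of_isMinOn (isMinOn_univ_iff.mpr hminD') hβD
    (mem_univ _) (mem_univ _)

/-- zero-update property of flexible GBT. If `D'` is obtained from `D` by
adding one comparison `(a, b, r, f)` with `r = Φ_f'((x_a − x_b)ᵀ β*(D))`, then
`β*(D') = β*(D)`. -/
theorem fgbt_zero_update
    {Dd A : ℕ} (x : Fin A → EuclideanSpace ℝ (Fin Dd))
    (S : Matrix (Fin Dd) (Fin Dd) ℝ) (hS : S.PosDef)
    (data : Multiset (Fin A × Fin A × ℝ × Measure ℝ))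
    (hvalid : ∀ q ∈ data, IsProbabilityMeasure q.2.2.2 ∧ HasExpMoments q.2.2.2)
    (a b : Fin A) (r : ℝ) (f : Measure ℝ) [IsProbabilityMeasure f] (hf : HasExpMoments f)
    (βD βD' : EuclideanSpace ℝ (Fin Dd))
    (hminD : ∀ γ : EuclideanSpace ℝ (Fin Dd),
      fgbtLoss x S data βD ≤ fgbtLoss x S data γ)
    (hminD' : ∀ γ : EuclideanSpace ℝ (Fin Dd),
      fgbtLoss x S ((a, b, r, f) ::ₘ data) βD' ≤ fgbtLoss x S ((a, b, r, f) ::ₘ data) γ)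
    (hr : r = deriv (cgfm f) ⟪x a - x b, βD⟫) :
    βD' = βD :=
  fgbt_zero_update_general x S hS data hvalid a b r f hf βD βD' hminD hminD' hr

end
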